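/- arXiv:2108.09708 — 2 statements merged into one kernel-verified Lean document; each statement's English description precedes it below -/
import Mathlib

section
/- Let K be an abstract elementary class in a finitary language L with λ = LS(K), let M ∈ K, and let A ⊆ |M| with |A| = λ. Then the following are equivalent: (1) A is closed under the interpretations in M of the function symbols of L, its induced structure belongs to K, and (as induced structure) A ≤_K M; (2) Player II has a winning strategy in the modified decomposition game G'_{ω·ω}(M,A), which is the decomposition game G_{ω·ω}(M) with the additional requirement in round 0 that the induced structure on A belongs to K and A ≤_K Y₀. -/
universe u

open FirstOrder FirstOrder.Language Cardinal

namespace AECFormalization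

variable (L : FirstOrder.Language.{u, u}) (U : Type u)

/-- An `L`-structure whose universe is a subset of a fixed ambient type `U`. -/
structure SStr : Type u where
  s : Set U
  str : L.Structure s

attribute [instance] SStr.str

variable {L U}

/-- The literal `L`-substructure relation between structures with universes inside
the same ambient type: the universe of `M` is a subset of that of `N`, and the
interpretations of all function and relation symbols agree. -/
def SStr.Sub (M N : SStr L U) : Prop :=
  ∃ h : M.s ⊆ N.s,
    (∀ (n : ℕ) (f : L.Functions n) (x : Fin n → M.s),
      ((Structure.funMap f x : M.s) : U)
        = ((Structure.funMap f (fun i => Set.inclusion h (x i)) : N.s) : U)) ∧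
    (∀ (n : ℕ) (r : L.Relations n) (x : Fin n → M.s),
      Structure.RelMap r x ↔ Structure.RelMap r (fun i => Set.inclusion h (x i)))

/-- `M` and `N` are isomorphic `L`-structures. -/
def SStr.Iso (M N : SStr L U) : Prop :=
  Nonempty (M.s ≃[L] N.s)

/-- `(M₁, N₁) ≅ (M₂, N₂)` : there is an isomorphism `f : N₁ ≅ N₂` carrying `M₁`
exactly onto `M₂` (so that `f ↾ M₁ : M₁ ≅ M₂` whenever the `Mᵢ` are substructures
of the `Nᵢ`). -/
def PairIso (M₁ N₁ M₂ N₂ : SStr L U) : Prop :=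
  ∃ f : N₁.s ≃[L] N₂.s, ∀ x : N₁.s, (x : U) ∈ M₁.s ↔ ((f x : N₂.s) : U) ∈ M₂.s

/-- `K`, together with the strong substructure relation `le`, is an abstract elementary
class with Löwenheim–Skolem number `lam`, among `L`-structures with universe contained
in the ambient type `U` (only members of cardinality `≥ lam = LS(K)` are considered). -/
structure IsAEC (L : FirstOrder.Language.{u, u}) (U : Type u) (K : Set (SStr L U))
    (le : SStr L U → SStr L U → Prop) (lam : Cardinal.{u}) : Prop where
  le_refl : ∀ M ∈ K, le M M
  le_trans : ∀ {M N P : SStr L U}, le M N → le N P → le M P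
  le_antisymm : ∀ {M N : SStr L U}, le M N → le N M → M = N
  mem_of_le : ∀ {M N : SStr L U}, le M N → M ∈ K ∧ N ∈ K
  sub_of_le : ∀ {M N : SStr L U}, le M N → M.Sub N
  mem_of_iso : ∀ {M N : SStr L U}, M ∈ K → M.Iso N → N ∈ K
  le_of_iso : ∀ {M₁ N₁ M₂ N₂ : SStr L U}, le M₁ N₁ → M₂.Sub N₂ →
    PairIso M₁ N₁ M₂ N₂ → le M₂ N₂
  coherence : ∀ {M₁ M₂ M₃ : SStr L U}, le M₁ M₃ → le M₂ M₃ → M₁.Sub M₂ → le M₁ M₂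
  lam_infinite : ℵ₀ ≤ lam
  lam_ge_card : L.card ≤ lam
  card_mem : ∀ M ∈ K, lam ≤ #M.s
  loewenheim_skolem : ∀ M ∈ K, ∀ A : Set U, A ⊆ M.s →
    ∃ N : SStr L U, le N M ∧ A ⊆ N.s ∧ #N.s ≤ lam + #A
  ls_minimal : ∀ μ : Cardinal.{u}, ℵ₀ ≤ μ → L.card ≤ μ →
    (∀ M ∈ K, ∀ A : Set U, A ⊆ M.s →
      ∃ N : SStr L U, le N M ∧ A ⊆ N.s ∧ #N.s ≤ μ + #A) → lam ≤ μ
  chain : ∀ (ι : Type u) [LinearOrder ι] [IsWellOrder ι (· < ·)] [Nonempty ι]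
    (M : ι → SStr L U), (∀ i j, i < j → le (M i) (M j)) → (∀ i, M i ∈ K) →
    ∃ MU : SStr L U, MU.s = ⋃ i, (M i).s ∧ MU ∈ K ∧ (∀ i, le (M i) MU) ∧
      ∀ N : SStr L U, (∀ i, le (M i) N) → le MU N

/-- `I(lam, K)` : the number of isomorphism classes of members of `K` of cardinality
`lam` (computed among structures with universe inside the ambient type). -/
noncomputable def numModels (K : Set (SStr L U)) (lam : Cardinal.{u}) : Cardinal.{u} :=
  #(Quot fun M N : {M : SStr L U // M ∈ K ∧ #M.s = lam} => M.1.Iso N.1)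

/-- `I₂(lam, K)` : the number of isomorphism classes of pairs `(M, N)` with
`M ≤_K N`, both of cardinality `lam`. -/
noncomputable def numPairs (K : Set (SStr L U)) (le : SStr L U → SStr L U → Prop)
    (lam : Cardinal.{u}) : Cardinal.{u} :=
  #(Quot fun p q : {p : SStr L U × SStr L U //
      p.1 ∈ K ∧ p.2 ∈ K ∧ le p.1 p.2 ∧ #p.1.s = lam ∧ #p.2.s = lam} =>
    PairIso p.1.1 p.1.2 q.1.1 q.1.2)

end AECFormalization

namespace AECFormalization

/-- Player II has a winning strategy in the modified decomposition game
`G'_δ(M, A)`: the decomposition game of length `δ` on `M` (see the paper), with the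
additional requirement in round `0` that the induced structure on `A` belongs to `K`
and is a strong substructure of Player II's move `Y₀`. -/
def WinsIIFrom (K : Set (SStr L U)) (le : SStr L U → SStr L U → Prop)
    (lam : Cardinal.{u}) (M : SStr L U) (A : Set U) (δ : Ordinal.{u}) : Prop :=
  ∃ σ : (Ordinal.{u} → Set U) → Ordinal.{u} → SStr L U,
    (∀ X X' α, (∀ β ≤ α, X β = X' β) → σ X α = σ X' α) ∧
    ∀ (X : Ordinal.{u} → Set U) (α : Ordinal.{u}), α < δ →
      (∀ β ≤ α, X β ⊆ M.s ∧ #(X β) ≤ lam) →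
      (σ X α).Sub M ∧ X α ⊆ (σ X α).s ∧ #(σ X α).s = lam ∧ σ X α ∈ K ∧
        (∀ β < α, le (σ X β) (σ X α)) ∧
        (α = 0 → ∃ A' : SStr L U, A'.s = A ∧ A'.Sub M ∧ A' ∈ K ∧ le A' (σ X 0))

/-!
If `A ≤_K M`, Player II answers each round with a `≤_K`-substructure of `M` of size `lam`
containing `A`, the current move and all earlier answers; coherence makes the answers a
`≤_K`-chain above `A`. Conversely, Player I opens with `A` and then always plays a hull in `M` of
Player II's last answer. In the first `ω` rounds the answers `Y n` interleave with these hulls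
`N n ≤_K M`, so both chains have the same union, which is `≤_K M` as the union of the `N n` and
lies `≥_K A` as the union of the `Y n`.
-/

variable {L : FirstOrder.Language.{u, u}} {U : Type u}

namespace SStr

theorem Sub.subset {M N : SStr L U} (h : M.Sub N) : M.s ⊆ N.s := h.choose

theorem sub_of_subset {M N P : SStr L U} (hMP : M.Sub P) (hNP : N.Sub P) (h : M.s ⊆ N.s) :
    M.Sub N := by
  obtain ⟨_, hfM, hrM⟩ := hMP
  obtain ⟨_, hfN, hrN⟩ := hNP
  exact ⟨h, fun n f x => (hfM n f x).trans (hfN n f (Set.inclusion h ∘ x)).symm,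
    fun n r x => (hrM n r x).trans (hrN n r (Set.inclusion h ∘ x)).symm⟩

theorem eq_of_sub_of_sub {M N P : SStr L U} (hMP : M.Sub P) (hNP : N.Sub P) (h : M.s = N.s) :
    M = N := by
  obtain ⟨s, fM, rM⟩ := M
  obtain ⟨s', fN, rN⟩ := N
  obtain rfl : s = s' := h
  obtain ⟨_, hfM, hrM⟩ := hMP
  obtain ⟨_, hfN, hrN⟩ := hNP
  have hf : @fM = @fN := by
    funext n f x
    exact Subtype.ext ((hfM n f x).trans (hfN n f x).symm)
  have hr : @rM = @rN := by
    funext n r x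
    exact propext ((hrM n r x).trans (hrN n r x).symm)
  rw [hf, hr]

-- Every tuple of the union already lies in one member of the chain.
theorem sub_of_iUnion {M N : SStr L U} {Y : ℕ → SStr L U} (hN : N.s = ⋃ n, (Y n).s)
    (hYN : ∀ n, (Y n).Sub N) (hYM : ∀ n, (Y n).Sub M) (hmono : Monotone fun n => (Y n).s) :
    N.Sub M := by
  have hNM : N.s ⊆ M.s := hN ▸ Set.iUnion_subset fun n => (hYM n).subset
  have tuple_mem : ∀ {k : ℕ} (x : Fin k → N.s), ∃ m, ∀ i, (x i : U) ∈ (Y m).s := by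
    intro k x
    choose n hn using fun i => Set.mem_iUnion.mp (hN.subset (x i).2)
    exact ⟨Finset.univ.sup n, fun i => hmono (Finset.le_sup (Finset.mem_univ i)) (hn i)⟩
  refine ⟨hNM, fun k f x => ?_, fun k r x => ?_⟩
  · obtain ⟨m, hm⟩ := tuple_mem x
    obtain ⟨_, hfN, _⟩ := hYN m
    obtain ⟨_, hfM, _⟩ := hYM m
    exact (hfN k f fun i => ⟨x i, hm i⟩).symm.trans (hfM k f _)
  · obtain ⟨m, hm⟩ := tuple_mem x
    obtain ⟨_, _, hrN⟩ := hYN m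
    obtain ⟨_, _, hrM⟩ := hYM m
    exact (hrN k r fun i => ⟨x i, hm i⟩).symm.trans (hrM k r _)

end SStr

theorem exists_play_against {α β : Type*} (σ : (Ordinal.{u} → α) → Ordinal.{u} → β)
    (hσ : ∀ X X' γ, (∀ δ ≤ γ, X δ = X' δ) → σ X γ = σ X' γ) (a : α) (next : β → α) :
    ∃ X : Ordinal.{u} → α, X 0 = a ∧ ∀ γ, X (γ + 1) = next (σ X γ) := by
  refine ⟨Ordinal.lt_wf.fix fun γ prev => if γ = 0 then a else
    next (σ (fun δ => if h : δ < γ then prev δ h else a) (Ordinal.pred γ)), ?_, fun γ => ?_⟩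
  · rw [WellFounded.fix_eq, if_pos rfl]
  · rw [WellFounded.fix_eq, if_neg (add_pos_of_right zero_lt_one γ).ne', Ordinal.pred_add_one]
    exact congrArg next (hσ _ _ γ fun δ hδ => dif_pos (Order.lt_add_one_iff.2 hδ))

/-- Junk when `M` has no strong substructure of cardinality `lam` containing `S`. -/
noncomputable def hull (le : SStr L U → SStr L U → Prop) (lam : Cardinal.{u}) (M : SStr L U)
    (S : Set U) : SStr L U :=
  @Classical.epsilon _ ⟨M⟩ fun N => le N M ∧ S ⊆ N.s ∧ #N.s = lam

noncomputable def hullStrategy (le : SStr L U → SStr L U → Prop) (lam : Cardinal.{u})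
    (M : SStr L U) (A : Set U) (X : Ordinal.{u} → Set U) : Ordinal.{u} → SStr L U :=
  Ordinal.lt_wf.fix fun α prev => hull le lam M (A ∪ X α ∪ ⋃ β, ⋃ h : β < α, (prev β h).s)

section HullStrategy

variable {le : SStr L U → SStr L U → Prop} {lam : Cardinal.{u}} {M : SStr L U} {A : Set U}

theorem hullStrategy_eq (X : Ordinal.{u} → Set U) (α : Ordinal.{u}) :
    hullStrategy le lam M A X α =
      hull le lam M (A ∪ X α ∪ ⋃ β < α, (hullStrategy le lam M A X β).s) :=
  Ordinal.lt_wf.fix_eq _ _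

theorem hullStrategy_congr {X X' : Ordinal.{u} → Set U} {α : Ordinal.{u}}
    (h : ∀ β ≤ α, X β = X' β) : hullStrategy le lam M A X α = hullStrategy le lam M A X' α := by
  induction α using WellFoundedLT.induction with
  | _ α IH =>
    have hprev : ⋃ β < α, (hullStrategy le lam M A X β).s =
        ⋃ β < α, (hullStrategy le lam M A X' β).s :=
      Set.iUnion₂_congr fun β hβ => by rw [IH β hβ fun γ hγ => h γ (hγ.trans hβ.le)]
    rw [hullStrategy_eq, hullStrategy_eq, h α le_rfl, hprev]

end HullStrategy

namespace IsAEC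

variable {K : Set (SStr L U)} {le : SStr L U → SStr L U → Prop} {lam : Cardinal.{u}}
  {M : SStr L U}

theorem chain_nat (hK : IsAEC L U K le lam) (Y : ℕ → SStr L U)
    (hY : ∀ n m, n < m → le (Y n) (Y m)) :
    ∃ YU : SStr L U, YU.s = ⋃ n, (Y n).s ∧ (∀ n, le (Y n) YU) ∧
      ∀ N : SStr L U, (∀ n, le (Y n) N) → le YU N := by
  obtain ⟨YU, hs, -, hle, hlub⟩ := hK.chain (ULift.{u} ℕ) (fun i => Y i.down)
    (fun i j hij => hY _ _ hij)
    fun i => (hK.mem_of_le (hY i.down (i.down + 1) i.down.lt_succ_self)).1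
  exact ⟨YU, hs.trans (Equiv.ulift.iSup_comp (g := fun n => (Y n).s)), fun n => hle ⟨n⟩,
    fun N hN => hlub N fun i => hN i.down⟩

theorem le_of_interleaved (hK : IsAEC L U K le lam) {Y N : ℕ → SStr L U}
    (hY : ∀ n m, n < m → le (Y n) (Y m)) (hYM : ∀ n, (Y n).Sub M) (hNM : ∀ n, le (N n) M)
    (hYN : ∀ n, (Y n).s ⊆ (N n).s) (hNY : ∀ n, (N n).s ⊆ (Y (n + 1)).s) (n : ℕ) :
    le (Y n) M := by
  have hYmono : Monotone fun n => (Y n).s :=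
    monotone_nat_of_le_succ fun n => (hK.sub_of_le (hY n (n + 1) n.lt_succ_self)).subset
  have hN : ∀ n m, n < m → le (N n) (N m) := fun n m hnm =>
    hK.coherence (hNM n) (hNM m) <| SStr.sub_of_subset (hK.sub_of_le (hNM n))
      (hK.sub_of_le (hNM m)) ((hNY n).trans ((hYmono hnm).trans (hYN m)))
  obtain ⟨YU, hYUs, hYYU, -⟩ := hK.chain_nat Y hY
  obtain ⟨NU, hNUs, -, hNUlub⟩ := hK.chain_nat N hN
  have hNUM : le NU M := hNUlub M hNM
  have hunion : YU.s = NU.s := by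
    rw [hYUs, hNUs]
    exact subset_antisymm (Set.iUnion_mono hYN)
      (Set.iUnion_subset fun n => (hNY n).trans (Set.subset_iUnion (fun m => (Y m).s) (n + 1)))
  have hYUM : YU.Sub M :=
    SStr.sub_of_iUnion hYUs (fun n => hK.sub_of_le (hYYU n)) hYM hYmono
  have hYUNU : YU = NU := SStr.eq_of_sub_of_sub hYUM (hK.sub_of_le hNUM) hunion
  exact hK.le_trans (hYYU n) (hYUNU ▸ hNUM)

theorem hull_spec (hK : IsAEC L U K le lam) (hM : M ∈ K) {S : Set U} (hS : S ⊆ M.s)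
    (hSc : #S ≤ lam) :
    le (hull le lam M S) M ∧ S ⊆ (hull le lam M S).s ∧ #(hull le lam M S).s = lam := by
  obtain ⟨N, hNM, hSN, hNc⟩ := hK.loewenheim_skolem M hM S hS
  have hNc' : #N.s = lam := _root_.le_antisymm
    (hNc.trans (Cardinal.add_le_of_le hK.lam_infinite le_rfl hSc))
    (hK.card_mem N (hK.mem_of_le hNM).1)
  exact Classical.epsilon_spec (p := fun N => le N M ∧ S ⊆ N.s ∧ #N.s = lam) ⟨N, hNM, hSN, hNc'⟩

theorem hullStrategy_spec (hK : IsAEC L U K le lam) (hM : M ∈ K) {A : Set U} (hA : A ⊆ M.s)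
    (hAc : #A ≤ lam) {δ : Ordinal.{u}} (hδ : δ.card ≤ lam) (X : Ordinal.{u} → Set U)
    {α : Ordinal.{u}} (hα : α < δ) (hX : ∀ β ≤ α, X β ⊆ M.s ∧ #(X β) ≤ lam) :
    le (hullStrategy le lam M A X α) M ∧
      A ∪ X α ∪ ⋃ β < α, (hullStrategy le lam M A X β).s ⊆ (hullStrategy le lam M A X α).s ∧
      #(hullStrategy le lam M A X α).s = lam := by
  induction α using WellFoundedLT.induction with
  | _ α IH =>
    have hprev : ∀ β < α, le (hullStrategy le lam M A X β) M ∧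
        #(hullStrategy le lam M A X β).s = lam := fun β hβ =>
      have h := IH β hβ (hβ.trans hα) fun γ hγ => hX γ (hγ.trans hβ.le)
      ⟨h.1, h.2.2⟩
    have hsub : ⋃ β < α, (hullStrategy le lam M A X β).s ⊆ M.s :=
      Set.iUnion₂_subset fun β hβ => (hK.sub_of_le (hprev β hβ).1).subset
    have hcard : #(⋃ β < α, (hullStrategy le lam M A X β).s) ≤ lam :=
      Cardinal.mk_biUnion_le_of_le ((Ordinal.card_le_card hα.le).trans hδ) hK.lam_infinite _
        fun β hβ => (hprev β hβ).2.le
    have hcard_union {S T : Set U} (hS : #S ≤ lam) (hT : #T ≤ lam) : #(S ∪ T : Set U) ≤ lam :=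
      (Cardinal.mk_union_le S T).trans (Cardinal.add_le_of_le hK.lam_infinite hS hT)
    rw [hullStrategy_eq]
    exact hK.hull_spec hM (Set.union_subset (Set.union_subset hA (hX α le_rfl).1) hsub)
      (hcard_union (hcard_union hAc (hX α le_rfl).2) hcard)

theorem winsIIFrom_of_le (hK : IsAEC L U K le lam) (hM : M ∈ K) {A : SStr L U} (hAM : le A M)
    (hAc : #A.s ≤ lam) {δ : Ordinal.{u}} (hδ : δ.card ≤ lam) : WinsIIFrom K le lam M A.s δ := by
  have hA := (hK.sub_of_le hAM).subset
  refine ⟨hullStrategy le lam M A.s, fun X X' α h => hullStrategy_congr h,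
    fun X α hα hX => ?_⟩
  obtain ⟨hYM, hY, hYc⟩ := hK.hullStrategy_spec hM hA hAc hδ X hα hX
  have hYsub := hK.sub_of_le hYM
  refine ⟨hYsub, fun x hx => hY (Or.inl (Or.inr hx)), hYc, (hK.mem_of_le hYM).1,
    fun β hβ => ?_, fun hα0 => ?_⟩
  · have hYβM := (hK.hullStrategy_spec hM hA hAc hδ X (hβ.trans hα)
      fun γ hγ => hX γ (hγ.trans hβ.le)).1
    exact hK.coherence hYβM hYM <| SStr.sub_of_subset (hK.sub_of_le hYβM) hYsub
      fun x hx => hY (Or.inr (Set.mem_biUnion hβ hx))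
  · subst hα0
    exact ⟨A, rfl, hK.sub_of_le hAM, (hK.mem_of_le hAM).1,
      hK.coherence hAM hYM (SStr.sub_of_subset (hK.sub_of_le hAM) hYsub
        fun x hx => hY (Or.inl (Or.inl hx)))⟩

theorem le_of_winsIIFrom (hK : IsAEC L U K le lam) (hM : M ∈ K) {A : Set U} (hA : A ⊆ M.s)
    (hAc : #A ≤ lam) {δ : Ordinal.{u}} (hδ : Ordinal.omega0 ≤ δ)
    (hwin : WinsIIFrom K le lam M A δ) :
    ∃ A' : SStr L U, A'.s = A ∧ A'.Sub M ∧ A' ∈ K ∧ le A' M := by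
  obtain ⟨σ, hσ, hσwin⟩ := hwin
  obtain ⟨X, hX0, hXsucc⟩ := exists_play_against σ hσ A fun Y => (hull le lam M Y.s).s
  have hlt (n : ℕ) : (n : Ordinal) < δ := (Ordinal.natCast_lt_omega0 n).trans_le hδ
  have hlegal (n : ℕ) : ∀ β ≤ (n : Ordinal), X β ⊆ M.s ∧ #(X β) ≤ lam := by
    induction n with
    | zero =>
      intro β hβ
      rw [Nat.cast_zero, nonpos_iff_eq_zero] at hβ
      rw [hβ, hX0]
      exact ⟨hA, hAc⟩
    | succ n ih =>
      intro β hβ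
      rw [Nat.cast_succ, ← Order.succ_eq_add_one, Order.le_succ_iff_eq_or_le] at hβ
      rcases hβ with rfl | hβ
      · obtain ⟨hYM, -, hYc, -⟩ := hσwin X n (hlt n) ih
        obtain ⟨hNM, -, hNc⟩ := hK.hull_spec hM hYM.subset hYc.le
        rw [Order.succ_eq_add_one, hXsucc]
        exact ⟨(hK.sub_of_le hNM).subset, hNc.le⟩
      · exact ih β hβ
  have hwin (n : ℕ) := hσwin X n (hlt n) (hlegal n)
  have hhull (n : ℕ) := hK.hull_spec hM (hwin n).1.subset (hwin n).2.2.1.le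
  have hY0M : le (σ X 0) M := by
    refine hK.le_of_interleaved (Y := fun n => σ X n) (N := fun n => hull le lam M (σ X n).s)
      (fun n m hnm => (hwin m).2.2.2.2.1 n (Nat.cast_lt.2 hnm)) (fun n => (hwin n).1)
      (fun n => (hhull n).1) (fun n => (hhull n).2.1) (fun n => ?_) 0
    simpa only [Nat.cast_succ, hXsucc] using (hwin (n + 1)).2.1
  obtain ⟨A', hA', hA'M, hA'K, hA'Y⟩ := (hwin 0).2.2.2.2.2 Nat.cast_zero
  exact ⟨A', hA', hA'M, hA'K, hK.le_trans (Nat.cast_zero (R := Ordinal) ▸ hA'Y) hY0M⟩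

end IsAEC

/-- Proposition 3.14 of the paper, game form.  For an AEC `K` with
`lam = LS(K)`, `M ∈ K` and `A ⊆ |M|` of cardinality `lam`, the following are
equivalent: (1) `A` is closed under the interpretations in `M` of the function symbols,
its induced structure belongs to `K`, and `A ≤_K M`; (2) Player II has a winning
strategy in the modified decomposition game of length `ω · ω` on `M` relative to `A`. -/
theorem strongSub_iff_winsII (L : FirstOrder.Language.{u, u}) (U : Type u)
    (K : Set (SStr L U)) (le : SStr L U → SStr L U → Prop) (lam : Cardinal.{u})
    (hK : IsAEC L U K le lam) (M : SStr L U) (hM : M ∈ K)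
    (A : Set U) (hA : A ⊆ M.s) (hcard : #A = lam) :
    (∃ A' : SStr L U, A'.s = A ∧ A'.Sub M ∧ A' ∈ K ∧ le A' M) ↔
      WinsIIFrom K le lam M A (Ordinal.omega0 * Ordinal.omega0) := by
  have hω : Ordinal.omega0 ≤ Ordinal.omega0 * Ordinal.omega0 :=
    Ordinal.le_mul_left _ Ordinal.omega0_pos
  have hωω : (Ordinal.omega0 * Ordinal.omega0).card ≤ lam := by
    rw [Ordinal.card_mul, Ordinal.card_omega0, Cardinal.aleph0_mul_aleph0]
    exact hK.lam_infinite
  refine ⟨?_, hK.le_of_winsIIFrom hM hA hcard.le hω⟩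
  rintro ⟨A', rfl, -, -, hA'M⟩
  exact hK.winsIIFrom_of_le hM hA'M hcard.le hωω

end AECFormalization
end

section
/- Let K be an abstract elementary class in a finitary language L with λ = LS(K), and let M, N ∈ K with M an L-substructure of N. Then M ≤_K N if and only if for every set A ⊆ |M| of cardinality λ that is closed under the interpretations in M of the function symbols of L, the following two conditions are equivalent: (the induced structure on A belongs to K and A ≤_K M) and (the induced structure on A belongs to K and A ≤_K N). -/
universe u

open FirstOrder FirstOrder.Language Cardinal

/-!
The forward direction is transitivity plus coherence. For the converse, induct on `‖M‖`.
If `‖M‖ = lam`, take `A = M`. Otherwise write `M` as the union of a `≤_K`-chain of strong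
submodels of size `< ‖M‖`, built by Löwenheim–Skolem along an enumeration of `M`; each link
inherits the hypothesis, so is `≤_K N` by induction, and the chain axiom gives `M ≤_K N`.
-/

namespace AECFormalization

open Set

theorem exists_eq_step_biUnion {ι α β : Type*} [LT ι] [WellFoundedLT ι] (s : β → Set α)
    (step : ι → Set α → β) : ∃ A : ι → β, ∀ i, A i = step i (⋃ j < i, s (A j)) :=
  ⟨wellFounded_lt.fix fun i rec => step i (⋃ j, ⋃ h : j < i, s (rec j h)),
    fun i => wellFounded_lt.fix_eq _ i⟩

/-- Bounds the stages of the filtration built in `IsAEC.exists_chain_of_lt_card`; the bare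
bound `#(t i) < #ι` could not be carried through limit stages when `#ι` is singular. -/
theorem mk_le_add_mk_Iic {ι α : Type u} [LinearOrder ι] [WellFoundedLT ι] {lam : Cardinal.{u}}
    (hlam : ℵ₀ ≤ lam) (t : ι → Set α) (f : ι → α)
    (ht : ∀ i, #(t i) ≤ lam + #↑(f '' Iic i ∪ ⋃ j < i, t j)) (i : ι) :
    #(t i) ≤ lam + #(Iic i) := by
  induction i using WellFoundedLT.induction with
  | _ i ih =>
  set c := lam + #(Iic i)
  have hc : ℵ₀ ≤ c := hlam.trans le_self_add
  have himage : #(f '' Iic i) ≤ c := mk_image_le.trans le_add_self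
  have hunion : #↑(⋃ j < i, t j) ≤ c :=
    calc #↑(⋃ j ∈ Iio i, t j) ≤ #(Iio i) * ⨆ j : Iio i, #(t j) := mk_biUnion_le _ _
      _ ≤ c * c := by
        refine mul_le_mul' ((mk_le_mk_of_subset Iio_subset_Iic_self).trans le_add_self) ?_
        refine ciSup_le' fun j => (ih j j.2).trans ?_
        exact add_le_add_right (mk_le_mk_of_subset (Iic_subset_Iic.2 j.2.le)) _
      _ = c := mul_eq_self hc
  calc #(t i) ≤ lam + (c + c) :=
      (ht i).trans (add_le_add_right ((mk_union_le _ _).trans (add_le_add himage hunion)) _)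
    _ = c := by rw [add_eq_self hc, add_eq_right hc le_self_add]

variable {L : FirstOrder.Language.{u, u}} {U : Type u}

theorem SStr.Sub.refl (M : SStr L U) : M.Sub M :=
  ⟨subset_rfl, fun _ _ _ => rfl, fun _ _ _ => Iff.rfl⟩

theorem SStr.Sub.trans {A B C : SStr L U} (hAB : A.Sub B) (hBC : B.Sub C) : A.Sub C :=
  let ⟨hAB, hfAB, hrAB⟩ := hAB
  let ⟨hBC, hfBC, hrBC⟩ := hBC
  ⟨hAB.trans hBC, fun n f x => (hfAB n f x).trans (hfBC n f _),
    fun n r x => (hrAB n r x).trans (hrBC n r _)⟩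

theorem SStr.Sub.of_subset {A B M : SStr L U} (hA : A.Sub M) (hB : B.Sub M) (h : A.s ⊆ B.s) :
    A.Sub B :=
  let ⟨_, hfA, hrA⟩ := hA
  let ⟨_, hfB, hrB⟩ := hB
  ⟨h, fun n f x => (hfA n f x).trans (hfB n f fun i => inclusion h (x i)).symm,
    fun n r x => (hrA n r x).trans (hrB n r fun i => inclusion h (x i)).symm⟩

def SameSmallLe (K : Set (SStr L U)) (le : SStr L U → SStr L U → Prop) (lam : Cardinal.{u})
    (M N : SStr L U) : Prop :=
  ∀ A : SStr L U, A.Sub M → #A.s = lam → ((A ∈ K ∧ le A M) ↔ (A ∈ K ∧ le A N))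

namespace IsAEC

variable {K : Set (SStr L U)} {le : SStr L U → SStr L U → Prop} {lam : Cardinal.{u}}
  (hK : IsAEC L U K le lam)
include hK

theorem sameSmallLe_of_le {M N : SStr L U} (hMN : le M N) : SameSmallLe K le lam M N :=
  fun _ hAM _ => ⟨fun h => ⟨h.1, hK.le_trans h.2 hMN⟩, fun h => ⟨h.1, hK.coherence h.2 hMN hAM⟩⟩

theorem sameSmallLe_of_le_of_sameSmallLe {A M N : SStr L U} (hAM : le A M)
    (hMN : SameSmallLe K le lam M N) : SameSmallLe K le lam A N := by
  intro B hBA hB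
  constructor
  · rintro ⟨hBK, hBA'⟩
    have hBM := hK.le_trans hBA' hAM
    exact ⟨hBK, ((hMN B (hK.sub_of_le hBM) hB).1 ⟨hBK, hBM⟩).2⟩
  · rintro ⟨hBK, hBN⟩
    have hBM := ((hMN B (hBA.trans (hK.sub_of_le hAM)) hB).2 ⟨hBK, hBN⟩).2
    exact ⟨hBK, hK.coherence hBM hAM hBA⟩

theorem le_of_iUnion_eq {ι : Type u} [LinearOrder ι] [WellFoundedLT ι] [Nonempty ι]
    {A : ι → SStr L U} {M N : SStr L U} (hM : M ∈ K) (hA : ∀ i j, i < j → le (A i) (A j))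
    (hAM : ∀ i, le (A i) M) (hAN : ∀ i, le (A i) N) (hunion : ⋃ i, (A i).s = M.s) :
    le M N := by
  obtain ⟨MU, hMU, -, -, hMU_le⟩ := hK.chain ι A hA fun i => (hK.mem_of_le (hAM i)).1
  have hMU_M := hMU_le M hAM
  have hM_MU : le M MU := hK.coherence (hK.le_refl M hM) hMU_M
    ((SStr.Sub.refl M).of_subset (hK.sub_of_le hMU_M) (hMU.trans hunion).ge)
  exact hK.le_trans hM_MU (hMU_le N hAN)

theorem exists_chain_of_lt_card {M : SStr L U} (hM : M ∈ K) (hlt : lam < #M.s) :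
    ∃ A : (#M.s).ord.ToType → SStr L U, (∀ i j, i < j → le (A i) (A j)) ∧
      (∀ i, le (A i) M) ∧ (∀ i, #(A i).s < #M.s) ∧ ⋃ i, (A i).s = M.s := by
  have hinf : ℵ₀ ≤ #M.s := hK.lam_infinite.trans hlt.le
  choose hull hull_le subset_hull card_hull using
    fun S : Set U => hK.loewenheim_skolem M hM (S ∩ M.s) inter_subset_right
  obtain ⟨e⟩ : Nonempty ((#M.s).ord.ToType ≃ M.s) := Cardinal.eq.1 (mk_ord_toType _)
  let f i : U := e i
  -- stage `i` is the hull of the first `i` elements of `M` together with all earlier stages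
  obtain ⟨A, hA⟩ := exists_eq_step_biUnion (fun P : SStr L U => P.s)
    fun i S => hull (f '' Iic i ∪ S)
  have hAM i : le (A i) M := (hA i).symm ▸ hull_le _
  have hAs i : (A i).s ⊆ M.s := (hK.sub_of_le (hAM i)).1
  have hstep i : f '' Iic i ∪ ⋃ j < i, (A j).s ⊆ (A i).s := by
    intro x hx
    rw [hA i]
    refine subset_hull _ ⟨hx, ?_⟩
    rcases hx with ⟨j, -, rfl⟩ | hx
    · exact (e j).2
    · obtain ⟨j, -, hj⟩ := mem_iUnion₂.1 hx
      exact hAs j hj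
  refine ⟨A, fun i j hij => ?_, hAM, fun i => ?_, ?_⟩
  · refine hK.coherence (hAM i) (hAM j)
      ((hK.sub_of_le (hAM i)).of_subset (hK.sub_of_le (hAM j)) fun x hx => ?_)
    exact hstep j (Or.inr (mem_iUnion₂.2 ⟨i, hij, hx⟩))
  · have hbound := mk_le_add_mk_Iic hK.lam_infinite (fun i => (A i).s) f (fun i => by
      rw [hA i]
      exact (card_hull _).trans (add_le_add_right (mk_le_mk_of_subset inter_subset_left) _)) i
    refine hbound.trans_lt (add_lt_of_lt hinf hlt ?_)
    simpa using mk_Iic_lt i (by simp) (by simpa using hinf)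
  · refine (iUnion_subset hAs).antisymm fun x hx => mem_iUnion.2 ⟨e.symm ⟨x, hx⟩, hstep _ ?_⟩
    exact Or.inl ⟨e.symm ⟨x, hx⟩, mem_Iic.2 le_rfl, by simp [f]⟩

theorem le_of_sameSmallLe {M N : SStr L U} (hM : M ∈ K) (hMN : SameSmallLe K le lam M N) :
    le M N := by
  suffices ∀ κ : Cardinal.{u}, ∀ M ∈ K, #M.s = κ → SameSmallLe K le lam M N → le M N from
    this _ M hM rfl hMN
  intro κ
  induction κ using Cardinal.lt_wf.induction with
  | _ κ ih =>
  rintro M hM rfl hMN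
  rcases (hK.card_mem M hM).eq_or_lt with hcard | hlt
  · exact ((hMN M (SStr.Sub.refl M) hcard.symm).1 ⟨hM, hK.le_refl M hM⟩).2
  have : Nonempty (#M.s).ord.ToType := by
    simpa using (aleph0_pos.trans_le (hK.lam_infinite.trans hlt.le)).ne'
  obtain ⟨A, hchain, hAM, hcardA, hunion⟩ := hK.exists_chain_of_lt_card hM hlt
  have hAN i : le (A i) N := ih _ (hcardA i) (A i) (hK.mem_of_le (hAM i)).1 rfl
    (hK.sameSmallLe_of_le_of_sameSmallLe (hAM i) hMN)
  exact hK.le_of_iUnion_eq hM hchain hAM hAN hunion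

end IsAEC

theorem le_iff_sigma_sub_general (L : FirstOrder.Language.{u, u}) (U : Type u)
    (K : Set (SStr L U)) (le : SStr L U → SStr L U → Prop) (lam : Cardinal.{u})
    (hK : IsAEC L U K le lam) (M N : SStr L U) (hM : M ∈ K) :
    le M N ↔
      ∀ A : SStr L U, A.Sub M → #A.s = lam →
        ((A ∈ K ∧ le A M) ↔ (A ∈ K ∧ le A N)) :=
  ⟨hK.sameSmallLe_of_le, hK.le_of_sameSmallLe hM⟩

/-- Proposition 3.15(1) of the paper.  Let `K` be an AEC with
`lam = LS(K)` and let `M, N ∈ K` with `M` an `L`-substructure of `N`.  Then `M ≤_K N`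
if and only if for every `L`-substructure `A` of `M` of cardinality `lam` (i.e. every
subset of `|M|` of cardinality `lam` closed under the function symbols, with its
induced structure), the conditions `(A ∈ K ∧ A ≤_K M)` and `(A ∈ K ∧ A ≤_K N)` are
equivalent. -/
theorem le_iff_sigma_sub (L : FirstOrder.Language.{u, u}) (U : Type u)
    (K : Set (SStr L U)) (le : SStr L U → SStr L U → Prop) (lam : Cardinal.{u})
    (hK : IsAEC L U K le lam) (M N : SStr L U) (hM : M ∈ K) (hN : N ∈ K)
    (hsub : M.Sub N) :
    le M N ↔
      ∀ A : SStr L U, A.Sub M → #A.s = lam →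
        ((A ∈ K ∧ le A M) ↔ (A ∈ K ∧ le A N)) :=
  le_iff_sigma_sub_general L U K le lam hK M N hM

end AECFormalization
end
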